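/- arXiv:0807.2987 — 2 statements merged into one kernel-verified Lean document; each statement's English description precedes it below -/
import Mathlib

section
/- Let ℙ be a translation-invariant Borel probability measure on Ω and set Coex = {ω ∈ Ω : V(T_{(1,1)}^ω) is infinite}. Then ℙ(Coex) > 0 if and only if, with positive ℙ-probability, there exists a non trivial infinite low-optimal path, i.e. an infinite sequence (z_n)_{n≥0} with z_0 = (0,0), z_{n+1} − z_n ∈ {(1,0),(0,1)}, each initial segment (z_0,…,z_n) equal to γ_{z_n}^ω, and which coincides with neither of the two axes ℤ₊(1,0) and ℤ₊(0,1). -/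
/-!
Initial segments of low-optimal paths are low-optimal, and so are final segments once translated
back to the origin. Hence if infinitely many `γ_z` pass through `(1,1)`, Kőnig's lemma (each site
has at most two successors) gives an infinite low-optimal path through `(1,1)`, which is
non-trivial. Conversely, a non-trivial infinite low-optimal path must turn, i.e. pass through
some `a` and `a + (1,1)`; restarted at `a` it shows `τ_a ω ∈ Coex`. The event of a non-trivial
path is thus covered by the countably many sets `τ_a⁻¹ Coex`, which are null when `Coex` is.
-/

open scoped NNReal

/-- A site of the lattice `ℤ²`. -/
abbrev Site : Type := ℤ × ℤ

/-- The positive quadrant `ℤ₊²`. -/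
def posQuad : Set Site := {z : Site | 0 ≤ z.1 ∧ 0 ≤ z.2}

/-- An admissible (up-right) step. -/
def IsStep (u v : Site) : Prop := v = u + (1, 0) ∨ v = u + (0, 1)

/-- `γ` is an up-right path from `(0,0)` to `z`, i.e. `γ ∈ Γ_z`. -/
def IsPathTo (z : Site) (γ : List Site) : Prop :=
  γ.head? = some ((0, 0) : Site) ∧ γ.getLast? = some z ∧ γ.Chain' IsStep

/-- The length `ω(γ) = Σ_{z ∈ γ} ω(z)` of a path `γ` under the configuration `ω`. -/
noncomputable def plen (ω : Site → ℝ) (γ : List Site) : ℝ := (γ.map ω).sum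

/-- `γ ∈ Γ_z` is `ω`-optimal if its length is maximal over `Γ_z`. -/
def IsOptimal (ω : Site → ℝ) (z : Site) (γ : List Site) : Prop :=
  IsPathTo z γ ∧ ∀ γ' : List Site, IsPathTo z γ' → plen ω γ' ≤ plen ω γ

/-- `γ` is below `γ'`: at every step index, the second coordinate of the site of `γ`
is at most that of the corresponding site of `γ'`. -/
def Below (γ γ' : List Site) : Prop :=
  ∀ (i : ℕ) (h : i < γ.length) (h' : i < γ'.length),
    (γ.get ⟨i, h⟩).2 ≤ (γ'.get ⟨i, h'⟩).2

/-- `γ` is the low-optimal path of `Γ_z`: it is `ω`-optimal and below every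
`ω`-optimal path of `Γ_z`. -/
def IsLowOptimal (ω : Site → ℝ) (z : Site) (γ : List Site) : Prop :=
  IsOptimal ω z γ ∧ ∀ γ' : List Site, IsOptimal ω z γ' → Below γ γ'

open Classical in
/-- The low-optimal path `γ_z^ω` (an arbitrary default when it does not exist). -/
noncomputable def lowOpt (ω : Site → ℝ) (z : Site) : List Site :=
  if h : ∃ γ : List Site, IsLowOptimal ω z γ then h.choose else []

/-- The vertex set `V(T_z^ω) = {z' ∈ ℤ₊² : z ∈ γ_{z'}^ω}` of the subtree rooted at `z`. -/
def treeV (ω : Site → ℝ) (z : Site) : Set Site :=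
  {z' : Site | z' ∈ posQuad ∧ z ∈ lowOpt ω z'}

/-- A point of the configuration space `Ω = [0,∞)^{ℤ²}`. -/
abbrev CfgNN : Type := Site → ℝ≥0

/-- The real-valued configuration associated to a point of `Ω`. -/
noncomputable def toCfg (ω : CfgNN) : Site → ℝ := fun z => (ω z : ℝ)

/-- The translation operator `τ_a(ω) = ω(a + ·)` on `Ω`. -/
def shift (a : Site) (ω : CfgNN) : CfgNN := fun z => ω (a + z)

/-- `ω` admits a non trivial infinite low-optimal path. -/
def NonTrivInfPath (ω : Site → ℝ) : Prop :=
  ∃ f : ℕ → Site, f 0 = (0, 0) ∧ (∀ n : ℕ, IsStep (f n) (f (n + 1))) ∧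
    (∀ n : ℕ, lowOpt ω (f n) = (List.range (n + 1)).map f) ∧
    (∃ n : ℕ, f n ≠ ((n : ℤ), 0)) ∧ (∃ n : ℕ, f n ≠ (0, (n : ℤ)))

open MeasureTheory

def IsPathBtw (u v : Site) (γ : List Site) : Prop :=
  γ.head? = some u ∧ γ.getLast? = some v ∧ γ.IsChain IsStep

def IsOptimalBtw (ω : Site → ℝ) (u v : Site) (γ : List Site) : Prop :=
  IsPathBtw u v γ ∧ ∀ γ' : List Site, IsPathBtw u v γ' → plen ω γ' ≤ plen ω γ

def IsLowOptimalBtw (ω : Site → ℝ) (u v : Site) (γ : List Site) : Prop :=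
  IsOptimalBtw ω u v γ ∧ ∀ γ' : List Site, IsOptimalBtw ω u v γ' → Below γ γ'

variable {ω : Site → ℝ} {a b u v w z : Site} {γ γ' δ t t' : List Site}

namespace IsStep

theorem lt (h : IsStep a b) : a < b := by
  rcases h with rfl | rfl <;> simp [Prod.lt_iff]

theorem fst_add_snd (h : IsStep a b) : b.1 + b.2 = a.1 + a.2 + 1 := by
  rcases h with rfl | rfl <;> simp <;> ring

theorem finite_setOf (a : Site) : {b | IsStep a b}.Finite :=
  (Set.toFinite {a + (1, 0), a + (0, 1)}).subset fun _ hb => hb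

end IsStep

theorem plen_append : plen ω (δ ++ t) = plen ω δ + plen ω t := by
  simp [plen]

theorem plen_cons : plen ω (a :: t) = ω a + plen ω t := by
  simp [plen]

theorem plen_shift_eq_plen_map (a : Site) (γ : List Site) :
    plen (fun x => ω (a + x)) γ = plen ω (γ.map (· + a)) := by
  simp [plen, Function.comp_def, add_comm]

namespace IsPathBtw

theorem eq_cons (h : IsPathBtw u v γ) : γ = u :: γ.tail :=
  List.eq_cons_of_mem_head? h.1

theorem fst_add_snd_of_getElem? (h : IsPathBtw u v γ) {i : ℕ} {x : Site}
    (hx : γ[i]? = some x) : x.1 + x.2 = u.1 + u.2 + i := by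
  obtain ⟨hu, -, hc⟩ := h
  induction i generalizing γ u with
  | zero => simp_all [List.head?_eq_getElem?]
  | succ i ih =>
    match γ, hu, hc, hx with
    | u :: c :: l, rfl, hc, hx =>
      obtain ⟨hs, hc⟩ := List.isChain_cons_cons.mp hc
      have := ih (by simpa using hx) rfl hc
      push_cast
      linarith [hs.fst_add_snd]

theorem length_eq (h : IsPathBtw u v γ) :
    (γ.length : ℤ) = v.1 + v.2 - (u.1 + u.2) + 1 := by
  have hne : γ ≠ [] := by rintro rfl; simp [IsPathBtw] at h
  have := h.fst_add_snd_of_getElem? (i := γ.length - 1)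
    (by rw [← List.getLast?_eq_getElem?]; exact h.2.1)
  have : 1 ≤ γ.length := List.length_pos_iff.mpr hne
  push_cast [Nat.cast_sub this] at *
  linarith

theorem splice (hδ : IsPathBtw u w δ) (hβ : IsPathBtw w v (w :: t)) :
    IsPathBtw u v (δ ++ t) := by
  obtain ⟨δ, rfl⟩ := List.getLast?_eq_some_iff.mp hδ.2.1
  refine ⟨?_, ?_, ?_⟩
  · simpa using hδ.1
  · simpa [List.getLast?_append] using hβ.2.1
  · simpa using List.isChain_split.mpr ⟨hδ.2.2, hβ.2.2⟩

theorem split (h : IsPathBtw u v (δ ++ t)) (hw : δ.getLast? = some w) :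
    IsPathBtw u w δ ∧ IsPathBtw w v (w :: t) := by
  obtain ⟨δ, rfl⟩ := List.getLast?_eq_some_iff.mp hw
  obtain ⟨hu, hv, hc⟩ := h
  rw [List.append_assoc, List.singleton_append, List.isChain_split] at hc
  refine ⟨⟨by simpa using hu, hw, hc.1⟩, rfl, ?_, hc.2⟩
  simpa [List.getLast?_append] using hv

theorem map_add (h : IsPathBtw u v γ) (a : Site) :
    IsPathBtw (u + a) (v + a) (γ.map (· + a)) := by
  refine ⟨by simp [h.1], by simp [h.2.1], ?_⟩
  refine (List.isChain_map _).mpr (h.2.2.imp fun x y hxy => ?_)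
  rcases hxy with rfl | rfl <;> [left; right] <;> abel

theorem of_map_add (h : IsPathBtw (u + a) (v + a) (γ.map (· + a))) : IsPathBtw u v γ := by
  simpa [Function.comp_def] using h.map_add (-a)

end IsPathBtw

namespace Below

theorem of_append {l₁ l₂ t₁ t₂ : List Site} (h : Below (l₁ ++ t₁) (l₂ ++ t₂)) :
    Below l₁ l₂ := by
  intro i h₁ h₂
  simpa [List.getElem_append_left h₁, List.getElem_append_left h₂] using
    h i (by simp; omega) (by simp; omega)

theorem of_append_left (h : Below (δ ++ t) (δ ++ t')) : Below t t' := by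
  intro i h₁ h₂
  simpa using h (δ.length + i) (by simp; omega) (by simp; omega)

theorem cons (h : Below t t') (a : Site) : Below (a :: t) (a :: t') := by
  rintro (_ | i) h₁ h₂
  · simp
  · simpa using h i (by simpa using h₁) (by simpa using h₂)

theorem of_map_add (h : Below (γ.map (· + a)) (γ'.map (· + a))) : Below γ γ' := by
  intro i h₁ h₂
  simpa using h i (by simpa using h₁) (by simpa using h₂)

end Below

theorem IsOptimalBtw.of_plen_le (h : IsOptimalBtw ω u v γ) (hγ' : IsPathBtw u v γ')
    (hle : plen ω γ ≤ plen ω γ') : IsOptimalBtw ω u v γ' :=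
  ⟨hγ', fun σ hσ => (h.2 σ hσ).trans hle⟩

namespace IsLowOptimalBtw

theorem split (h : IsLowOptimalBtw ω u v (δ ++ t)) (hw : δ.getLast? = some w) :
    IsLowOptimalBtw ω u w δ ∧ IsLowOptimalBtw ω w v (w :: t) := by
  obtain ⟨⟨hpath, hopt⟩, hlow⟩ := h
  obtain ⟨hδ, hβ⟩ := hpath.split hw
  have optδ : ∀ δ', IsPathBtw u w δ' → plen ω δ' ≤ plen ω δ := fun δ' hδ' => by
    simpa [plen_append] using hopt _ (hδ'.splice hβ)
  have optβ : ∀ t', IsPathBtw w v (w :: t') → plen ω t' ≤ plen ω t := fun t' hβ' => by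
    simpa [plen_append] using hopt _ (hδ.splice hβ')
  have hopt' : IsOptimalBtw ω u v (δ ++ t) := ⟨hpath, hopt⟩
  refine ⟨⟨⟨hδ, optδ⟩, fun δ' hδ' => ?_⟩, ⟨⟨hβ, fun β' hβ' => ?_⟩, fun β' hβ' => ?_⟩⟩
  · refine (hlow _ (hopt'.of_plen_le (hδ'.1.splice hβ) ?_)).of_append
    simpa [plen_append] using hδ'.2 δ hδ
  · obtain ⟨t', rfl⟩ : ∃ t', β' = w :: t' := ⟨_, hβ'.eq_cons⟩
    simpa [plen_cons] using optβ _ hβ'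
  · obtain ⟨t', rfl⟩ : ∃ t', β' = w :: t' := ⟨_, hβ'.1.eq_cons⟩
    refine ((hlow _ (hopt'.of_plen_le (hδ.splice hβ'.1) ?_)).of_append_left).cons w
    simpa [plen_append, plen_cons] using hβ'.2 _ hβ

theorem of_map_add (h : IsLowOptimalBtw ω (u + a) (v + a) (γ.map (· + a))) :
    IsLowOptimalBtw (fun x => ω (a + x)) u v γ := by
  obtain ⟨⟨hpath, hopt⟩, hlow⟩ := h
  have opt : ∀ γ', IsPathBtw u v γ' →
      plen (fun x => ω (a + x)) γ' ≤ plen (fun x => ω (a + x)) γ := fun γ' hγ' => by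
    simpa only [plen_shift_eq_plen_map] using hopt _ (hγ'.map_add a)
  have hγ : IsPathBtw u v γ := hpath.of_map_add
  refine ⟨⟨hγ, opt⟩, fun γ' hγ' => (hlow _ ?_).of_map_add⟩
  refine IsOptimalBtw.of_plen_le ⟨hpath, hopt⟩ (hγ'.1.map_add a) ?_
  simpa only [plen_shift_eq_plen_map] using hγ'.2 γ hγ

theorem unique (h : IsLowOptimalBtw ω u v γ) (h' : IsLowOptimalBtw ω u v γ') : γ = γ' := by
  have hlen : γ.length = γ'.length := by
    have := h.1.1.length_eq; have := h'.1.1.length_eq; omega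
  refine List.ext_getElem hlen fun i h₁ h₂ => ?_
  have e₂ : (γ[i]).2 = (γ'[i]).2 :=
    le_antisymm (h.2 _ h'.1 i h₁ h₂) (h'.2 _ h.1 i h₂ h₁)
  have l₁ := h.1.1.fst_add_snd_of_getElem? (List.getElem?_eq_getElem h₁)
  have l₂ := h'.1.1.fst_add_snd_of_getElem? (List.getElem?_eq_getElem h₂)
  exact Prod.ext (by linarith) e₂

end IsLowOptimalBtw

theorem lowOpt_eq (h : IsLowOptimal ω z γ) : lowOpt ω z = γ := by
  have hex : ∃ γ, IsLowOptimal ω z γ := ⟨γ, h⟩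
  rw [lowOpt, dif_pos hex]
  exact IsLowOptimalBtw.unique hex.choose_spec h

theorem isLowOptimal_lowOpt_of_mem (h : a ∈ lowOpt ω z) : IsLowOptimal ω z (lowOpt ω z) := by
  obtain ⟨γ, hγ⟩ : ∃ γ, IsLowOptimal ω z γ := by
    by_contra hex
    simp [lowOpt, hex] at h
  rwa [lowOpt_eq hγ]

-- Kőnig's lemma, for trees of lists ordered by prefix.
theorem exists_forall_range_map_mem {α : Type*} {S : Set (List α)} (hS : S.Infinite)
    (hpre : ∀ δ ∈ S, ∀ δ', δ' <+: δ → δ' ∈ S)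
    (hfin : ∀ δ, {x | δ ++ [x] ∈ S}.Finite) :
    ∃ f : ℕ → α, ∀ n, (List.range n).map f ∈ S := by
  let above (δ : List α) : Set (List α) := {δ' ∈ S | δ <+: δ'}
  have step : ∀ δ, (above δ).Infinite → ∃ x, (above (δ ++ [x])).Infinite := by
    intro δ hδ
    by_contra! hfin'
    refine hδ ((((hfin δ).biUnion fun x _ => hfin' x).insert δ).subset ?_)
    rintro _ ⟨hδ'S, r, rfl⟩
    rcases r with _ | ⟨x, r⟩
    · simp
    · exact Or.inr (Set.mem_iUnion₂.mpr ⟨x, hpre _ hδ'S _ ⟨r, by simp⟩, hδ'S, r, by simp⟩)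
  let seq : ℕ → {δ // (above δ).Infinite} := Nat.rec ⟨[], hS.mono fun δ h => ⟨h, List.nil_prefix⟩⟩
    fun _ δ => ⟨_, (step _ δ.2).choose_spec⟩
  let f n := (step _ (seq n).2).choose
  have hseq : ∀ n, (seq n).1 = (List.range n).map f := by
    intro n
    induction n with
    | zero => rfl
    | succ n ih => simp [List.range_succ, ← ih, f, seq]
  refine ⟨f, fun n => ?_⟩
  obtain ⟨δ', hδ'S, hδ'⟩ := (seq n).2.nonempty
  exact hpre δ' hδ'S _ (hseq n ▸ hδ')

theorem nonTrivInfPath_of_infinite_treeV (h : (treeV ω (1, 1)).Infinite) : NonTrivInfPath ω := by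
  have hlow : ∀ z ∈ treeV ω (1, 1), IsLowOptimalBtw ω (0, 0) z (lowOpt ω z) :=
    fun z hz => isLowOptimal_lowOpt_of_mem hz.2
  set S := {δ : List Site | ∃ z ∈ treeV ω (1, 1), δ <+: lowOpt ω z}
  have hS : S.Infinite := by
    have hlast : ∀ z ∈ treeV ω (1, 1), (lowOpt ω z).getLast? = some z :=
      fun z hz => (hlow z hz).1.1.2.1
    refine (h.image (f := lowOpt ω) fun z hz z' hz' he => ?_).mono ?_
    · exact Option.some.inj ((hlast z hz).symm.trans (he ▸ hlast z' hz'))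
    · rintro _ ⟨z, hz, rfl⟩
      exact ⟨z, hz, List.prefix_refl _⟩
  have hfin : ∀ δ, {x | δ ++ [x] ∈ S}.Finite := by
    intro δ
    refine ((IsStep.finite_setOf (δ.getLastD (0, 0))).insert (0, 0)).subset ?_
    rintro x ⟨z, hz, r, hr⟩
    have hpath := (hlow z hz).1.1
    rw [← hr] at hpath
    rcases δ.eq_nil_or_concat with rfl | ⟨δ, y, rfl⟩
    · exact Or.inl (by simpa using hpath.1)
    · have := (List.isChain_append.mp hpath.2.2).1
      simp only [List.concat_eq_append, List.append_assoc, List.singleton_append,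
        List.isChain_append_cons_cons] at this
      simpa using Or.inr this.2.1
  obtain ⟨f, hf⟩ :=
    exists_forall_range_map_mem hS (fun _ ⟨z, hz, h⟩ _ h' => ⟨z, hz, h'.trans h⟩) hfin
  have hlowf : ∀ n, IsLowOptimalBtw ω (0, 0) (f n) ((List.range (n + 1)).map f) := by
    intro n
    obtain ⟨z, hz, r, hr⟩ := hf (n + 1)
    have := hlow z hz
    rw [← hr] at this
    exact (this.split (by simp [List.getLast?_range])).1
  have hf2 : f 2 = (1, 1) := by
    obtain ⟨z, hz, r, hr⟩ := hf 3
    obtain ⟨i, hi⟩ := List.mem_iff_getElem?.mp hz.2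
    have hi2 := (hlow z hz).1.1.fst_add_snd_of_getElem? hi
    obtain rfl : i = 2 := by simp at hi2; omega
    simpa [← hr, List.getElem?_append_left] using hi
  refine ⟨f, ?_, fun n => ?_, fun n => lowOpt_eq (hlowf n), ⟨2, by simp [hf2]⟩,
    ⟨2, by simp [hf2]⟩⟩
  · simpa using (hlowf 0).1.1.1
  · have : List.IsChain IsStep _ := (hlowf (n + 1)).1.1.2.2
    rw [List.isChain_map, List.isChain_range_succ] at this
    exact this n (by omega)

theorem exists_turn {f : ℕ → Site} (h0 : f 0 = (0, 0)) (hstep : ∀ n, IsStep (f n) (f (n + 1)))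
    (h₁ : ∃ n : ℕ, f n ≠ ((n : ℤ), 0)) (h₂ : ∃ n : ℕ, f n ≠ (0, (n : ℤ))) :
    ∃ k, f (k + 2) = f k + (1, 1) := by
  let P m := f (m + 1) = f m + (1, 0)
  obtain ⟨m, hm⟩ : ∃ m, ¬(P m ↔ P (m + 1)) := by
    by_contra! hc
    have hconst : ∀ m, P m ↔ P 0 := fun m => by
      induction m with
      | zero => rfl
      | succ m ih => exact (hc m).symm.trans ih
    by_cases hP : P 0
    · obtain ⟨n, hn⟩ := h₁
      refine hn ?_
      clear hn
      induction n with
      | zero => simpa using h0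
      | succ n ih =>
        have : f (n + 1) = f n + (1, 0) := (hconst n).mpr hP
        simp [this, ih]
    · obtain ⟨n, hn⟩ := h₂
      refine hn ?_
      clear hn
      induction n with
      | zero => simpa using h0
      | succ n ih =>
        have := (hstep n).resolve_left (mt (hconst n).mp hP)
        simp [this, ih]
  refine ⟨m, ?_⟩
  rcases hstep m with h | h <;> rcases hstep (m + 1) with h' | h' <;> simp_all [P] <;>
    simp [Prod.ext_iff]

theorem exists_infinite_treeV_shift_of_nonTrivInfPath (h : NonTrivInfPath ω) :
    ∃ a, (treeV (fun x => ω (a + x)) (1, 1)).Infinite := by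
  obtain ⟨f, hf0, hstep, hlow, h₁, h₂⟩ := h
  obtain ⟨k, hk⟩ := exists_turn hf0 hstep h₁ h₂
  have hmono : StrictMono f := strictMono_nat_of_lt_succ fun n => (hstep n).lt
  have hLO : ∀ m, IsLowOptimalBtw ω (0, 0) (f m) ((List.range (m + 1)).map f) := fun m => by
    have := isLowOptimal_lowOpt_of_mem (a := f m) (z := f m) (ω := ω)
      (by rw [hlow m]; exact List.mem_map_of_mem List.self_mem_range_succ)
    rwa [hlow m] at this
  set g : ℕ → Site := fun n => f (k + n) - f k
  have hlowg : ∀ n, lowOpt (fun x => ω (f k + x)) (g n) = (List.range (n + 1)).map g := by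
    intro n
    have hsplit : (List.range (k + n + 1)).map f =
        (List.range (k + 1)).map f ++ (List.range n).map (fun i => f (k + 1 + i)) := by
      rw [show k + n + 1 = k + 1 + n by omega, List.range_add, List.map_append, List.map_map]
      rfl
    have := hLO (k + n)
    rw [hsplit] at this
    have := (this.split (w := f k) (by simp [List.getLast?_range])).2
    refine lowOpt_eq (IsLowOptimalBtw.of_map_add (a := f k) ?_)
    simpa [g, List.range_succ_eq_map, Function.comp_def, add_assoc, add_comm 1, Prod.mk_zero_zero]
      using this
  have hg2 : g 2 = (1, 1) := by simp [g, hk]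
  have hmem : ∀ n, g (n + 2) ∈ treeV (fun x => ω (f k + x)) (1, 1) := fun n => by
    refine ⟨?_, ?_⟩
    · obtain ⟨h₁, h₂⟩ := Prod.le_def.mp (hmono.monotone (k.le_add_right (n + 2)))
      exact ⟨sub_nonneg.mpr h₁, sub_nonneg.mpr h₂⟩
    · rw [hlowg, ← hg2]
      exact List.mem_map_of_mem (List.mem_range.mpr (by omega))
  refine ⟨f k, Set.infinite_of_injective_forall_mem (fun a b hab => ?_) hmem⟩
  have := hmono.injective (sub_left_inj.mp hab)
  omega

theorem measurable_shift (a : Site) : Measurable (shift a) :=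
  measurable_pi_lambda _ fun _ => measurable_pi_apply _

theorem coexistence_iff_general (ℙ : Measure CfgNN)
    (hinv : ∀ a : Site, ℙ.map (shift a) = ℙ) :
    0 < ℙ {ω : CfgNN | (treeV (toCfg ω) (1, 1)).Infinite} ↔
      0 < ℙ {ω : CfgNN | NonTrivInfPath (toCfg ω)} := by
  refine ⟨fun h => h.trans_le (measure_mono fun ω => nonTrivInfPath_of_infinite_treeV), ?_⟩
  simp only [pos_iff_ne_zero, ne_eq]
  refine mt fun hcoex => measure_mono_null (fun ω hω => ?_) (measure_iUnion_null fun a =>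
    (MeasurePreserving.mk (measurable_shift a) (hinv a)).preimage_null hcoex)
  exact Set.mem_iUnion.mpr (exists_infinite_treeV_shift_of_nonTrivInfPath hω)

/-- `ℙ(Coex) > 0` iff with positive probability there exists a non trivial
infinite low-optimal path. -/
theorem coexistence_iff (ℙ : Measure CfgNN) [IsProbabilityMeasure ℙ]
    (hinv : ∀ a : Site, ℙ.map (shift a) = ℙ) :
    0 < ℙ {ω : CfgNN | (treeV (toCfg ω) (1, 1)).Infinite} ↔
      0 < ℙ {ω : CfgNN | NonTrivInfPath (toCfg ω)} :=
  coexistence_iff_general ℙ hinv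
end

section
/- Let ω ∈ Ω and let ε : ℤ² → [0,∞) vanish off the two axes, i.e. ε(x,y) = 0 whenever x·y ≠ 0. If ε(0,1) + ε(0,2) ≥ ε(1,0) and ε(1,0) + ε(2,0) ≥ ε(0,1), then V(T_{(1,1)}^{ω+ε}) ⊆ V(T_{(1,1)}^ω). -/
open scoped NNReal

/-!
Up-right paths to `z` are compared site by site through their heights, and the lower envelope
of two optimal paths is again optimal (its length plus that of the upper envelope is the sum of
the two lengths), so the low-optimal path exists and `Below` is antisymmetric on `Γ_z`.
Since `ε` vanishes off the axes, the `ε`-length of a path is decided by its first three sites: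
through `(1,1)` it is at most `ε(0,0) + max(ε(1,0), ε(0,1))`, through `(2,0)` or `(0,2)` it is
at least that, by the two hypotheses. So if the `ω`-low-optimal path `δ` avoided `(1,1)` while
the `(ω+ε)`-low-optimal path `γ` visits it, `δ` would be `(ω+ε)`-optimal and `γ` would be
`ω`-optimal; each would then lie below the other, forcing `γ = δ`.
-/

lemma IsStep.le {u v : Site} (h : IsStep u v) : u ≤ v := by
  rcases h with rfl | rfl <;> simp [Prod.le_def]

lemma List.IsChain.isStep_le_of_mem {a b : Site} {t : List Site}
    (h : (a :: t).IsChain IsStep) (hb : b ∈ a :: t) : a ≤ b := by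
  rcases List.mem_cons.1 hb with rfl | hb
  · exact le_rfl
  · exact List.rel_of_pairwise_cons ((h.imp fun _ _ => IsStep.le).pairwise) hb

namespace IsPathTo

variable {z w : Site} {γ δ : List Site}

lemma ne_nil (h : IsPathTo z γ) : γ ≠ [] := by
  rintro rfl
  simp [IsPathTo] at h

lemma isChain (h : IsPathTo z γ) : γ.IsChain IsStep := h.2.2

lemma getElem_zero (h : IsPathTo z γ) :
    γ[0]'(List.length_pos_iff.2 h.ne_nil) = (0, 0) := by
  simpa [List.head?_eq_getElem?, List.getElem?_eq_getElem (List.length_pos_iff.2 h.ne_nil)]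
    using h.1

lemma getElem_length_sub_one (h : IsPathTo z γ) :
    γ[γ.length - 1]'(by have := List.length_pos_iff.2 h.ne_nil; omega) = z := by
  have hpos := List.length_pos_iff.2 h.ne_nil
  simpa [List.getLast?_eq_getElem?,
    List.getElem?_eq_getElem (show γ.length - 1 < γ.length by omega)]
    using h.2.1

lemma fst_add_snd_getElem (h : IsPathTo z γ) (i : ℕ) (hi : i < γ.length) :
    γ[i].1 + γ[i].2 = i := by
  induction i with
  | zero => simp [h.getElem_zero]
  | succ i ih =>
    have := ih (by omega)
    rcases h.isChain.getElem i hi with hs | hs <;> rw [hs] <;> simp <;> omega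

lemma length_eq (h : IsPathTo z γ) : (γ.length : ℤ) = z.1 + z.2 + 1 := by
  have hpos := List.length_pos_iff.2 h.ne_nil
  have := h.fst_add_snd_getElem (γ.length - 1) (by omega)
  rw [h.getElem_length_sub_one] at this
  omega

lemma length_eq_length (h : IsPathTo z γ) (h' : IsPathTo z δ) : γ.length = δ.length := by
  have := h.length_eq
  have := h'.length_eq
  omega

lemma exists_getElem_eq_of_mem (h : IsPathTo z γ) (hw : w ∈ γ) {i : ℕ} (hi : w.1 + w.2 = i) :
    ∃ hi : i < γ.length, γ[i] = w := by
  obtain ⟨j, hj, rfl⟩ := List.getElem_of_mem hw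
  obtain rfl : j = i := by have := h.fst_add_snd_getElem j hj; omega
  exact ⟨hj, rfl⟩

lemma mem_Icc (h : IsPathTo z γ) (hw : w ∈ γ) : w ∈ Set.Icc (0, 0) z := by
  obtain ⟨t, rfl⟩ := List.head?_eq_some_iff.1 h.1
  refine ⟨h.isChain.isStep_le_of_mem hw, ?_⟩
  obtain ⟨s, hs⟩ := List.getLast?_eq_some_iff.1 h.2.1
  have hpw := (h.isChain.imp fun _ _ => IsStep.le).pairwise
  rw [hs, List.pairwise_append] at hpw
  rw [hs, List.mem_append, List.mem_singleton] at hw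
  rcases hw with hw | rfl
  · exact hpw.2.2 w hw z (List.mem_singleton_self z)
  · exact le_rfl

lemma eq_of_snd_getElem_eq (h : IsPathTo z γ) (h' : IsPathTo z δ)
    (hsnd : ∀ i (hi : i < γ.length) (hi' : i < δ.length), γ[i].2 = δ[i].2) : γ = δ := by
  refine List.ext_getElem (h.length_eq_length h') fun i hi hi' => Prod.ext ?_ (hsnd i hi hi')
  have := h.fst_add_snd_getElem i hi
  have := h'.fst_add_snd_getElem i hi'
  have := hsnd i hi hi'
  omega

lemma eq_of_below_of_below (h : IsPathTo z γ) (h' : IsPathTo z δ) (hγδ : Below γ δ)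
    (hδγ : Below δ γ) : γ = δ :=
  h.eq_of_snd_getElem_eq h' fun i hi hi' => le_antisymm (hγδ i hi hi') (hδγ i hi' hi)

lemma exists_eq_cons₃ (h : IsPathTo z γ) (hlen : 3 ≤ γ.length) :
    ∃ a w t, γ = (0, 0) :: a :: w :: t ∧ IsStep (0, 0) a ∧ IsStep a w ∧
      (w :: t).IsChain IsStep := by
  obtain ⟨_ | ⟨a, _ | ⟨w, t⟩⟩, rfl⟩ := List.head?_eq_some_iff.1 h.1
  · simp at hlen
  · simp at hlen
  · have hch := h.isChain
    simp only [List.isChain_cons_cons] at hch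
    exact ⟨a, w, t, rfl, hch.1, hch.2.1, hch.2.2⟩

end IsPathTo

lemma setOf_isPathTo_finite (z : Site) : {γ | IsPathTo z γ}.Finite := by
  refine ((List.finite_length_eq (Set.Icc ((0, 0) : Site) z) (z.1 + z.2 + 1).toNat).image
    (List.map Subtype.val)).subset ?_
  intro γ hγ
  refine ⟨γ.attachWith _ fun w hw => hγ.mem_Icc hw, ?_, List.attachWith_map_subtype_val _⟩
  have := hγ.length_eq
  simp only [Set.mem_ofPred_eq, List.length_attachWith]
  omega

lemma exists_isOptimal (ω : Site → ℝ) {z : Site} {γ : List Site} (hγ : IsPathTo z γ) :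
    ∃ γ, IsOptimal ω z γ := by
  obtain ⟨δ, hδ, hmax⟩ := (setOf_isPathTo_finite z).exists_maximalFor (plen ω) _ ⟨γ, hγ⟩
  exact ⟨δ, hδ, fun γ' hγ' => le_of_not_gt fun hlt => hlt.not_ge (hmax hγ' hlt.le)⟩

-- The `i`-th sites of two paths lie on one antidiagonal, so `zipWith lowerSite` and
-- `zipWith upperSite` are the lower and upper envelopes of two paths.
def lowerSite (u v : Site) : Site := if u.2 ≤ v.2 then u else v

def upperSite (u v : Site) : Site := if u.2 ≤ v.2 then v else u

lemma isStep_lowerSite {u u' v v' : Site} (hs : IsStep u v) (hs' : IsStep u' v')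
    (hsum : u.1 + u.2 = u'.1 + u'.2) : IsStep (lowerSite u u') (lowerSite v v') := by
  obtain ⟨a, b⟩ := u; obtain ⟨c, d⟩ := u'; obtain ⟨p, q⟩ := v; obtain ⟨r, s⟩ := v'
  unfold lowerSite IsStep at *
  simp only [Prod.ext_iff, Prod.fst_add, Prod.snd_add] at *
  split_ifs <;> omega

lemma isStep_upperSite {u u' v v' : Site} (hs : IsStep u v) (hs' : IsStep u' v')
    (hsum : u.1 + u.2 = u'.1 + u'.2) : IsStep (upperSite u u') (upperSite v v') := by
  obtain ⟨a, b⟩ := u; obtain ⟨c, d⟩ := u'; obtain ⟨p, q⟩ := v; obtain ⟨r, s⟩ := v'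
  unfold upperSite IsStep at *
  simp only [Prod.ext_iff, Prod.fst_add, Prod.snd_add] at *
  split_ifs <;> omega

lemma IsPathTo.zipWith {z : Site} {γ δ : List Site} {f : Site → Site → Site}
    (hf : ∀ u, f u u = u)
    (hstep : ∀ {u u' v v'}, IsStep u v → IsStep u' v' → u.1 + u.2 = u'.1 + u'.2 →
      IsStep (f u u') (f v v'))
    (h : IsPathTo z γ) (h' : IsPathTo z δ) : IsPathTo z (List.zipWith f γ δ) := by
  have hlen := h.length_eq_length h'
  have hpos := List.length_pos_iff.2 h.ne_nil
  refine ⟨?_, ?_, ?_⟩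
  · rw [List.head?_eq_getElem?, List.getElem?_zipWith, ← List.head?_eq_getElem?,
      ← List.head?_eq_getElem?, h.1, h'.1]
    simp [hf]
  · rw [List.getLast?_eq_getElem?, List.getElem?_zipWith, List.length_zipWith, hlen, min_self,
      ← hlen, ← List.getLast?_eq_getElem?, hlen, ← List.getLast?_eq_getElem?, h.2.1, h'.2.1]
    simp [hf]
  · refine List.isChain_iff_getElem.2 fun i hi => ?_
    simp only [List.length_zipWith, List.getElem_zipWith] at hi ⊢
    exact hstep (h.isChain.getElem i (by omega)) (h'.isChain.getElem i (by omega))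
      (by rw [h.fst_add_snd_getElem, h'.fst_add_snd_getElem])

lemma plen_zipWith_lowerSite_add_upperSite (ω : Site → ℝ) :
    ∀ {γ δ : List Site}, γ.length = δ.length →
      plen ω (List.zipWith lowerSite γ δ) + plen ω (List.zipWith upperSite γ δ) =
        plen ω γ + plen ω δ
  | [], [], _ => by simp [plen]
  | a :: γ, b :: δ, h => by
    have ih := plen_zipWith_lowerSite_add_upperSite ω (γ := γ) (δ := δ) (by simpa using h)
    have hab : ω (lowerSite a b) + ω (upperSite a b) = ω a + ω b := by
      unfold lowerSite upperSite; split_ifs <;> ring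
    simp only [plen, List.zipWith_cons_cons, List.map_cons, List.sum_cons] at ih ⊢
    linarith

lemma IsOptimal.zipWith_lowerSite {ω : Site → ℝ} {z : Site} {γ δ : List Site}
    (h : IsOptimal ω z γ) (h' : IsOptimal ω z δ) : IsOptimal ω z (List.zipWith lowerSite γ δ) := by
  have hsum := plen_zipWith_lowerSite_add_upperSite ω (h.1.length_eq_length h'.1)
  have hup := h.2 _ (h.1.zipWith (f := upperSite) (fun _ => ite_self _) isStep_upperSite h'.1)
  refine ⟨h.1.zipWith (f := lowerSite) (fun _ => ite_self _) isStep_lowerSite h'.1, fun τ hτ => ?_⟩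
  linarith [h'.2 τ hτ]

lemma below_zipWith_lowerSite_left (γ δ : List Site) : Below (List.zipWith lowerSite γ δ) γ := by
  intro i _ _
  simp only [List.get_eq_getElem, List.getElem_zipWith, lowerSite]
  split_ifs <;> omega

lemma below_zipWith_lowerSite_right (γ δ : List Site) : Below (List.zipWith lowerSite γ δ) δ := by
  intro i _ _
  simp only [List.get_eq_getElem, List.getElem_zipWith, lowerSite]
  split_ifs <;> omega

lemma Below.trans {γ δ τ : List Site} (h : Below γ δ) (h' : Below δ τ)
    (hlen : γ.length ≤ δ.length) : Below γ τ :=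
  fun i hi hi' => (h i hi (by omega)).trans (h' i (by omega) hi')

lemma exists_isLowOptimal (ω : Site → ℝ) {z : Site} {γ : List Site} (hγ : IsPathTo z γ) :
    ∃ γ, IsLowOptimal ω z γ := by
  obtain ⟨γ₀, hγ₀⟩ := exists_isOptimal ω hγ
  have hfin : {γ | IsOptimal ω z γ}.Finite := (setOf_isPathTo_finite z).subset fun _ h => h.1
  suffices ∀ s : Finset (List Site), (∀ δ ∈ s, IsOptimal ω z δ) →
      ∃ γ, IsOptimal ω z γ ∧ ∀ δ ∈ s, Below γ δ by
    obtain ⟨m, hm, hbelow⟩ := this hfin.toFinset fun δ => hfin.mem_toFinset.1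
    exact ⟨m, hm, fun δ hδ => hbelow δ (hfin.mem_toFinset.2 hδ)⟩
  intro s
  induction s using Finset.induction_on with
  | empty => exact fun _ => ⟨γ₀, hγ₀, by simp⟩
  | insert a s _ ih =>
    intro hs
    obtain ⟨m, hm, hbelow⟩ := ih fun δ hδ => hs δ (Finset.mem_insert_of_mem hδ)
    have ha := hs a (Finset.mem_insert_self a s)
    refine ⟨_, hm.zipWith_lowerSite ha, fun δ hδ => ?_⟩
    rcases Finset.mem_insert.1 hδ with rfl | hδ
    · exact below_zipWith_lowerSite_right m δ
    · exact (below_zipWith_lowerSite_left m a).trans (hbelow δ hδ) (by simp)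

lemma isLowOptimal_lowOpt {ω : Site → ℝ} {z : Site} (h : ∃ γ, IsLowOptimal ω z γ) :
    IsLowOptimal ω z (lowOpt ω z) := by
  rw [lowOpt, dif_pos h]
  exact h.choose_spec

lemma exists_isLowOptimal_of_mem_lowOpt {ω : Site → ℝ} {z w : Site} (hw : w ∈ lowOpt ω z) :
    ∃ γ, IsLowOptimal ω z γ := by
  by_contra h
  simp [lowOpt, h] at hw

lemma plen_add (ω ε : Site → ℝ) (γ : List Site) :
    plen (fun s => ω s + ε s) γ = plen ω γ + plen ε γ :=
  List.sum_map_add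

lemma IsOptimal.swap_of_plen_le {ω ε : Site → ℝ} {z : Site} {γ δ : List Site}
    (hγ : IsOptimal (fun s => ω s + ε s) z γ) (hδ : IsOptimal ω z δ)
    (hε : plen ε γ ≤ plen ε δ) :
    IsOptimal (fun s => ω s + ε s) z δ ∧ IsOptimal ω z γ := by
  obtain ⟨hγp, hγmax⟩ := hγ
  obtain ⟨hδp, hδmax⟩ := hδ
  simp only [IsOptimal, plen_add] at hγmax ⊢
  have := hγmax δ hδp
  have := hδmax γ hγp
  exact ⟨⟨hδp, fun τ hτ => by linarith [hγmax τ hτ]⟩, ⟨hγp, fun τ hτ => by linarith [hδmax τ hτ]⟩⟩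

section AxisWeights

variable {ε : Site → ℝ} {z : Site} {γ δ : List Site}

lemma plen_eq_zero_of_isChain (hvan : ∀ z : Site, z.1 * z.2 ≠ 0 → ε z = 0) {w : Site}
    {t : List Site} (hch : (w :: t).IsChain IsStep) (hw : (1, 1) ≤ w) : plen ε (w :: t) = 0 := by
  refine List.sum_eq_zero fun x hx => ?_
  obtain ⟨b, hb, rfl⟩ := List.mem_map.1 hx
  obtain ⟨hb1, hb2⟩ := hw.trans (hch.isStep_le_of_mem hb)
  exact hvan b (mul_ne_zero (by simp at hb1; omega) (by simp at hb2; omega))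

lemma plen_le_of_one_one_mem (hvan : ∀ z : Site, z.1 * z.2 ≠ 0 → ε z = 0)
    (hγ : IsPathTo z γ) (h11 : ((1, 1) : Site) ∈ γ) :
    plen ε γ ≤ ε (0, 0) + max (ε (1, 0)) (ε (0, 1)) := by
  obtain ⟨hlen, hγ2⟩ := hγ.exists_getElem_eq_of_mem h11 (i := 2) (by norm_num)
  obtain ⟨a, w, t, rfl, ha, -, hch⟩ := hγ.exists_eq_cons₃ hlen
  obtain rfl : w = (1, 1) := hγ2
  have hplen : plen ε ((0, 0) :: a :: (1, 1) :: t) = ε (0, 0) + ε a + plen ε ((1, 1) :: t) := by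
    simp only [plen, List.map_cons, List.sum_cons]
    ring
  rw [hplen, plen_eq_zero_of_isChain hvan hch le_rfl, add_zero, add_le_add_iff_left]
  rcases ha with rfl | rfl
  · exact le_max_left _ _
  · exact le_max_right _ _

lemma le_plen_of_one_one_not_mem (hε : ∀ z : Site, 0 ≤ ε z)
    (h1 : ε (1, 0) ≤ ε (0, 1) + ε (0, 2)) (h2 : ε (0, 1) ≤ ε (1, 0) + ε (2, 0))
    (hγ : IsPathTo z γ) (hlen : 3 ≤ γ.length) (h11 : ((1, 1) : Site) ∉ γ) :
    ε (0, 0) + max (ε (1, 0)) (ε (0, 1)) ≤ plen ε γ := by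
  obtain ⟨a, w, t, rfl, ha, hw, -⟩ := hγ.exists_eq_cons₃ hlen
  have hplen : plen ε ((0, 0) :: a :: w :: t) = ε (0, 0) + ε a + ε w + plen ε t := by
    simp only [plen, List.map_cons, List.sum_cons]
    ring
  have ht : 0 ≤ plen ε t := List.sum_nonneg fun x hx => by
    obtain ⟨b, -, rfl⟩ := List.mem_map.1 hx
    exact hε b
  rw [hplen]
  rcases ha with rfl | rfl <;> rcases hw with rfl | rfl
  · norm_num
    linarith [max_le (le_add_of_nonneg_right (hε (2, 0))) h2]
  · norm_num at h11
  · norm_num at h11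
  · norm_num
    linarith [max_le h1 (le_add_of_nonneg_right (hε (0, 2)))]

lemma plen_le_plen_of_one_one_mem_of_not_mem (hε : ∀ z : Site, 0 ≤ ε z)
    (hvan : ∀ z : Site, z.1 * z.2 ≠ 0 → ε z = 0)
    (h1 : ε (1, 0) ≤ ε (0, 1) + ε (0, 2)) (h2 : ε (0, 1) ≤ ε (1, 0) + ε (2, 0))
    (hγ : IsPathTo z γ) (hδ : IsPathTo z δ) (hγ11 : ((1, 1) : Site) ∈ γ)
    (hδ11 : ((1, 1) : Site) ∉ δ) : plen ε γ ≤ plen ε δ := by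
  have hlen : 3 ≤ δ.length :=
    hγ.length_eq_length hδ ▸ (hγ.exists_getElem_eq_of_mem hγ11 (i := 2) (by norm_num)).1
  exact (plen_le_of_one_one_mem hvan hγ hγ11).trans
    (le_plen_of_one_one_not_mem hε h1 h2 hδ hlen hδ11)

end AxisWeights

theorem tree_shrinks_general (ω ε : Site → ℝ)
    (hε : ∀ z : Site, 0 ≤ ε z) (hvan : ∀ z : Site, z.1 * z.2 ≠ 0 → ε z = 0)
    (h1 : ε (1, 0) ≤ ε (0, 1) + ε (0, 2)) (h2 : ε (0, 1) ≤ ε (1, 0) + ε (2, 0)) :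
    treeV (fun s => ω s + ε s) (1, 1) ⊆ treeV ω (1, 1) := by
  rintro z ⟨hz, h11⟩
  have hγ := isLowOptimal_lowOpt (exists_isLowOptimal_of_mem_lowOpt h11)
  have hδ := isLowOptimal_lowOpt (exists_isLowOptimal ω hγ.1.1)
  refine ⟨hz, ?_⟩
  by_contra hδ11
  obtain ⟨hδ', hγ'⟩ := hγ.1.swap_of_plen_le hδ.1
    (plen_le_plen_of_one_one_mem_of_not_mem hε hvan h1 h2 hγ.1.1 hδ.1.1 h11 hδ11)
  exact hδ11 (hγ.1.1.eq_of_below_of_below hδ.1.1 (hγ.2 _ hδ') (hδ.2 _ hγ') ▸ h11)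

/-- Step I of the proof of Theorem 2: if `ε` vanishes off the axes and satisfies
`ε(0,1)+ε(0,2) ≥ ε(1,0)` and `ε(1,0)+ε(2,0) ≥ ε(0,1)`, then
`V(T_{(1,1)}^{ω+ε}) ⊆ V(T_{(1,1)}^ω)`. -/
theorem tree_shrinks (ω ε : Site → ℝ) (hω : ∀ z : Site, 0 ≤ ω z)
    (hε : ∀ z : Site, 0 ≤ ε z) (hvan : ∀ z : Site, z.1 * z.2 ≠ 0 → ε z = 0)
    (h1 : ε (1, 0) ≤ ε (0, 1) + ε (0, 2)) (h2 : ε (0, 1) ≤ ε (1, 0) + ε (2, 0)) :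
    treeV (fun s => ω s + ε s) (1, 1) ⊆ treeV ω (1, 1) :=
  tree_shrinks_general ω ε hε hvan h1 h2
end
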